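/- arXiv:2602.10538 — 3 statements merged into one kernel-verified Lean document; each statement's English description precedes it below -/
import Mathlib

section
/- Worst-case provability regret bound for greedy score-guided planning: let B ≥ 1, let h_1,…,h_B : X × A → [0,1] be measurable score functions, and suppose that for each b = 1,…,B, sup_{(x,a)∈X×A} |h_b(x,a) − Q_b^*(x,a)| ≤ ε_b. Let σ_b : X → A be measurable greedy selectors with h_b(x, σ_b(x)) = sup_{a∈A} h_b(x,a) for all x, and define the greedy value functions W_0(x) := 1_G(x) and W_b(x) := max(1_G(x), ∫_X W_{b−1}(x') P(dx'|x, σ_b(x))) for b = 1,…,B. Then for every x ∈ X, 0 ≤ V_B^*(x) − W_B(x) ≤ 2 ∑_{b=1}^B ε_b. -/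
open MeasureTheory Filter Topology Set

set_option linter.unusedSectionVars false

section AuxApprox

section Approx
variable {X : Type*} [MetricSpace X] [Nonempty X]

noncomputable def uscApprox (V : X → ℝ) (n : ℕ) (x : X) : ℝ :=
  ⨆ y, (V y - n * dist x y)

variable {V : X → ℝ} (h0 : ∀ y, 0 ≤ V y) (h1 : ∀ y, V y ≤ 1)
include h1

omit [Nonempty X] in
lemma uscApprox_bddAbove (n : ℕ) (x : X) :
    BddAbove (Set.range fun y => V y - n * dist x y) := by
  refine ⟨1, ?_⟩
  rintro _ ⟨y, rfl⟩
  show V y - (n:ℝ) * dist x y ≤ 1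
  have : (0:ℝ) ≤ (n:ℝ) * dist x y := by positivity
  linarith [h1 y]

lemma uscApprox_le_one (n : ℕ) (x : X) : uscApprox V n x ≤ 1 := by
  refine ciSup_le fun y => ?_
  have : (0:ℝ) ≤ n * dist x y := by positivity
  linarith [h1 y]

lemma le_uscApprox (n : ℕ) (x : X) : V x ≤ uscApprox V n x := by
  have := le_ciSup (uscApprox_bddAbove h1 n x) x
  simpa [uscApprox] using this

include h0 in
lemma uscApprox_nonneg (n : ℕ) (x : X) : 0 ≤ uscApprox V n x :=
  (h0 x).trans (le_uscApprox h1 n x)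

lemma uscApprox_anti (x : X) : Antitone fun n => uscApprox V n x := by
  intro m n hmn
  refine ciSup_le fun y => ?_
  have hd : (0:ℝ) ≤ dist x y := dist_nonneg
  have : V y - n * dist x y ≤ V y - m * dist x y := by
    have : (m:ℝ) * dist x y ≤ n * dist x y := by
      apply mul_le_mul_of_nonneg_right _ hd
      exact_mod_cast hmn
    push_cast
    linarith
  exact this.trans (le_ciSup (uscApprox_bddAbove h1 m x) y)

lemma uscApprox_lipschitz (n : ℕ) : LipschitzWith n (uscApprox V n) := by
  apply LipschitzWith.of_dist_le_mul
  intro x x'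
  rw [Real.dist_eq, abs_sub_le_iff]
  constructor
  · rw [sub_le_iff_le_add]
    refine ciSup_le fun y => ?_
    have htri : dist x' y ≤ dist x' x + dist x y := dist_triangle _ _ _
    have : V y - n * dist x y ≤ (V y - n * dist x' y) + n * dist x x' := by
      have : (n:ℝ) * dist x' y ≤ n * dist x x + n * dist x' x + n * dist x y := by
        nlinarith [dist_nonneg (x := x) (y := x), dist_comm x x']
      rw [dist_comm x x']
      nlinarith [dist_comm x x']
    refine this.trans ?_
    have h2 : V y - (n:ℝ) * dist x' y ≤ uscApprox V n x' :=
      le_ciSup (uscApprox_bddAbove h1 n x') y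
    push_cast
    linarith
  · rw [sub_le_iff_le_add]
    refine ciSup_le fun y => ?_
    have htri : dist x y ≤ dist x x' + dist x' y := dist_triangle _ _ _
    have : V y - n * dist x' y ≤ (V y - n * dist x y) + n * dist x x' := by
      nlinarith
    refine this.trans ?_
    have h2 : V y - (n:ℝ) * dist x y ≤ uscApprox V n x :=
      le_ciSup (uscApprox_bddAbove h1 n x) y
    push_cast
    linarith

lemma uscApprox_continuous (n : ℕ) : Continuous (uscApprox V n) :=
  (uscApprox_lipschitz h1 n).continuous

lemma uscApprox_tendsto (hV : UpperSemicontinuous V) (x : X) :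
    Tendsto (fun n => uscApprox V n x) atTop (𝓝 (V x)) := by
  rw [tendsto_order]
  constructor
  · intro c hc
    exact Eventually.of_forall fun n => lt_of_lt_of_le hc (le_uscApprox h1 n x)
  · intro c hc
    obtain ⟨c', hc1, hc2⟩ := exists_between hc
    have h := hV x c' hc1
    rw [Metric.eventually_nhds_iff] at h
    obtain ⟨r, hr, hball⟩ := h
    obtain ⟨N, hN⟩ := exists_nat_ge ((1 - c') / r)
    filter_upwards [eventually_ge_atTop N] with n hn
    have key : uscApprox V n x ≤ c' := by
      refine ciSup_le fun y => ?_
      by_cases hy : dist y x < r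
      · have := hball hy
        have : V y < c' := this
        have hd : (0:ℝ) ≤ n * dist x y := by positivity
        linarith
      · push_neg at hy
        have hnr : (1 - c') / r ≤ n := hN.trans (by exact_mod_cast hn)
        have : 1 - c' ≤ (n:ℝ) * r := by
          rw [div_le_iff₀ hr] at hnr; linarith
        have hd : (n:ℝ) * r ≤ n * dist x y := by
          rw [dist_comm]
          apply mul_le_mul_of_nonneg_left hy (by positivity)
        linarith [h1 y]
    exact lt_of_le_of_lt key hc2

end Approx


set_option linter.unusedSectionVars false

section B
variable {X A' : Type*} [MetricSpace X] [Nonempty X] [MeasurableSpace X] [BorelSpace X]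
  [TopologicalSpace A']

lemma integrable_of_bounded01 {μ : Measure X} [IsProbabilityMeasure μ]
    {f : X → ℝ} (hf : AEStronglyMeasurable f μ) (h0 : ∀ y, 0 ≤ f y) (h1 : ∀ y, f y ≤ 1) :
    Integrable f μ :=
  Integrable.mono' (integrable_const 1) hf
    (ae_of_all _ fun y => by rw [Real.norm_eq_abs, abs_of_nonneg (h0 y)]; exact h1 y)

lemma integral_le_one {μ : Measure X} [IsProbabilityMeasure μ]
    {f : X → ℝ} (hf : Integrable f μ) (h1 : ∀ y, f y ≤ 1) :
    ∫ y, f y ∂μ ≤ 1 := by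
  calc ∫ y, f y ∂μ ≤ ∫ _, (1:ℝ) ∂μ := integral_mono hf (integrable_const 1) h1
  _ = 1 := by simp

lemma usc_integral (P : X → A' → Measure X) (hP : ∀ x a, IsProbabilityMeasure (P x a))
    (hFeller : ∀ f : X → ℝ, Continuous f →
      Continuous fun p : X × A' => ∫ x', f x' ∂(P p.1 p.2))
    {V : X → ℝ} (hV : UpperSemicontinuous V) (h0 : ∀ y, 0 ≤ V y) (h1 : ∀ y, V y ≤ 1) :
    UpperSemicontinuous (fun p : X × A' => ∫ x', V x' ∂(P p.1 p.2)) := by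
  have hVm : Measurable V := hV.measurable
  have hcont : ∀ n : ℕ, Continuous fun p : X × A' => ∫ x', uscApprox V n x' ∂(P p.1 p.2) :=
    fun n => hFeller _ (uscApprox_continuous h1 n)
  have key : ∀ p : X × A', (∫ x', V x' ∂(P p.1 p.2))
      = ⨅ n : ℕ, ∫ x', uscApprox V n x' ∂(P p.1 p.2) := by
    intro p
    haveI := hP p.1 p.2
    have hFint : ∀ n : ℕ, Integrable (uscApprox V n) (P p.1 p.2) := fun n =>
      integrable_of_bounded01 (uscApprox_continuous h1 n).aestronglyMeasurable
        (uscApprox_nonneg h0 h1 n) (uscApprox_le_one h1 n)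
    have hanti : Antitone fun n : ℕ => ∫ x', uscApprox V n x' ∂(P p.1 p.2) := by
      intro m n hmn
      exact integral_mono (hFint n) (hFint m) (fun y => uscApprox_anti h1 y hmn)
    have hbdd : BddBelow (Set.range fun n : ℕ => ∫ x', uscApprox V n x' ∂(P p.1 p.2)) := by
      refine ⟨0, ?_⟩
      rintro _ ⟨n, rfl⟩
      exact integral_nonneg (uscApprox_nonneg h0 h1 n)
    have htend : Tendsto (fun n : ℕ => ∫ x', uscApprox V n x' ∂(P p.1 p.2)) atTop
        (𝓝 (∫ x', V x' ∂(P p.1 p.2))) := by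
      refine tendsto_integral_of_dominated_convergence (fun _ => (1:ℝ))
        (fun n => (uscApprox_continuous h1 n).aestronglyMeasurable)
        (integrable_const 1) (fun n => ae_of_all _ fun y => ?_)
        (ae_of_all _ fun y => uscApprox_tendsto h1 hV y)
      rw [Real.norm_eq_abs, abs_of_nonneg (uscApprox_nonneg h0 h1 n y)]
      exact uscApprox_le_one h1 n y
    exact tendsto_nhds_unique htend (tendsto_atTop_ciInf hanti hbdd)
  have : (fun p : X × A' => ∫ x', V x' ∂(P p.1 p.2))
      = fun p => ⨅ n : ℕ, ∫ x', uscApprox V n x' ∂(P p.1 p.2) := funext key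
  rw [this]
  refine upperSemicontinuous_ciInf (fun p => ?_) fun n =>
    (hcont n).upperSemicontinuous
  refine ⟨0, ?_⟩
  rintro _ ⟨n, rfl⟩
  haveI := hP p.1 p.2
  exact integral_nonneg (uscApprox_nonneg h0 h1 n)

end B

section C
variable {X A' : Type*} [TopologicalSpace X] [TopologicalSpace A'] [CompactSpace A'] [Nonempty A']

lemma usc_sup {g : X × A' → ℝ} (hg : UpperSemicontinuous g) (hb : ∀ p, g p ≤ 1) :
    UpperSemicontinuous fun x => ⨆ a, g (x, a) := by
  intro x c hc
  obtain ⟨c', hc1, hc2⟩ := exists_between hc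
  have hbdd : ∀ y : X, BddAbove (Set.range fun a => g (y, a)) := by
    intro y; exact ⟨1, by rintro _ ⟨a, rfl⟩; exact hb _⟩
  have hsub : ({x} : Set X) ×ˢ (univ : Set A') ⊆ g ⁻¹' Iio c' := by
    rintro ⟨y, a⟩ ⟨hy, -⟩
    simp only [mem_singleton_iff] at hy
    subst hy
    exact lt_of_le_of_lt (le_ciSup (hbdd y) a) hc1
  obtain ⟨u, v, hu, _, hxu, hv, huv⟩ := generalized_tube_lemma isCompact_singleton
    isCompact_univ (hg.isOpen_preimage c') hsub
  filter_upwards [hu.mem_nhds (hxu rfl)] with y hy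
  have : (⨆ a, g (y, a)) ≤ c' := by
    refine ciSup_le fun a => le_of_lt ?_
    exact huv ⟨hy, hv (mem_univ a)⟩
  exact lt_of_le_of_lt this hc2

lemma usc_max {f g : X → ℝ} (hf : UpperSemicontinuous f) (hg : UpperSemicontinuous g) :
    UpperSemicontinuous fun x => max (f x) (g x) := by
  intro x c hc
  rw [max_lt_iff] at hc
  filter_upwards [hf x c hc.1, hg x c hc.2] with y h1 h2
  exact max_lt h1 h2

end C
section D
variable {X A' : Type*} [MetricSpace X] [Nonempty X] [MeasurableSpace X] [BorelSpace X]
  [SecondCountableTopology X] [TopologicalSpace A'] [MeasurableSpace A'] [OpensMeasurableSpace A']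

lemma measurable_P (P : X → A' → Measure X) (hP : ∀ x a, IsProbabilityMeasure (P x a))
    (hFeller : ∀ f : X → ℝ, Continuous f →
      Continuous fun p : X × A' => ∫ x', f x' ∂(P p.1 p.2)) :
    Measurable fun p : X × A' => P p.1 p.2 := by
  apply Measure.measurable_of_measurable_coe
  have main : ∀ ⦃s : Set X⦄, MeasurableSet s → Measurable fun p : X × A' => P p.1 p.2 s := by
    apply MeasurableSet.induction_on_open
    · -- open sets
      intro U hU
      by_cases hUuniv : U = univ
      · subst hUuniv
        have : (fun p : X × A' => P p.1 p.2 Set.univ) = fun _ => 1 := by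
          funext p; haveI := hP p.1 p.2; exact measure_univ
        rw [this]; exact measurable_const
      · have hne : Uᶜ.Nonempty := by
          rw [nonempty_compl]; exact hUuniv
        set f : ℕ → X → ℝ := fun n y => min 1 (n * Metric.infDist y Uᶜ) with hf
        have hfc : ∀ n, Continuous (f n) :=
          fun n => continuous_const.min (continuous_const.mul (Metric.continuous_infDist_pt Uᶜ))
        have hf0 : ∀ n y, 0 ≤ f n y := fun n y =>
          le_min zero_le_one (mul_nonneg (Nat.cast_nonneg n) Metric.infDist_nonneg)
        have hf1 : ∀ n y, f n y ≤ 1 := fun n y => min_le_left _ _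
        have hftend : ∀ y, Filter.Tendsto (fun n => f n y) Filter.atTop
            (nhds (Set.indicator U (fun _ => (1:ℝ)) y)) := by
          intro y
          by_cases hy : y ∈ U
          · have hd : 0 < Metric.infDist y Uᶜ :=
              (hU.isClosed_compl.notMem_iff_infDist_pos hne).1 (by simpa using hy)
            rw [Set.indicator_of_mem hy]
            apply Filter.Tendsto.congr' _ tendsto_const_nhds
            obtain ⟨N, hN⟩ := exists_nat_ge (1 / Metric.infDist y Uᶜ)
            filter_upwards [Filter.eventually_ge_atTop N] with n hn
            have : (1:ℝ) ≤ n * Metric.infDist y Uᶜ := by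
              rw [div_le_iff₀ hd] at hN
              calc (1:ℝ) ≤ N * Metric.infDist y Uᶜ := hN
                _ ≤ n * Metric.infDist y Uᶜ := by
                  apply mul_le_mul_of_nonneg_right _ hd.le
                  exact_mod_cast hn
            simp [hf, min_eq_left this]
          · rw [Set.indicator_of_notMem hy]
            have : Metric.infDist y Uᶜ = 0 := Metric.infDist_zero_of_mem (by simpa using hy)
            have h0' : (fun n : ℕ => f n y) = fun _ => 0 := by
              funext n
              simp only [hf, this, mul_zero]
              exact min_eq_right zero_le_one
            rw [h0']
            exact tendsto_const_nhds
        have hmeasR : Measurable fun p : X × A' => ((P p.1 p.2) U).toReal := by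
          apply measurable_of_tendsto_metrizable
            (f := fun n (p : X × A') => ∫ x', f n x' ∂(P p.1 p.2))
            (fun n => (hFeller (f n) (hfc n)).measurable)
          rw [tendsto_pi_nhds]
          intro p
          haveI := hP p.1 p.2
          have : ((P p.1 p.2) U).toReal = ∫ x', Set.indicator U (fun _ => (1:ℝ)) x' ∂(P p.1 p.2) :=
            (MeasureTheory.integral_indicator_one hU.measurableSet).symm
          rw [this]
          refine MeasureTheory.tendsto_integral_of_dominated_convergence (fun _ => (1:ℝ))
            (fun n => (hfc n).aestronglyMeasurable)
            (MeasureTheory.integrable_const 1) (fun n => Filter.Eventually.of_forall fun y => ?_)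
            (Filter.Eventually.of_forall hftend)
          rw [Real.norm_eq_abs, abs_of_nonneg (hf0 n y)]
          exact hf1 n y
        have : (fun p : X × A' => (P p.1 p.2) U)
            = fun p => ENNReal.ofReal (((P p.1 p.2) U).toReal) := by
          funext p
          rw [ENNReal.ofReal_toReal (measure_ne_top _ _)]
        rw [this]
        exact hmeasR.ennreal_ofReal
    · -- complement
      intro t ht hmt
      have : (fun p : X × A' => (P p.1 p.2) tᶜ) = fun p => 1 - (P p.1 p.2) t := by
        funext p
        haveI := hP p.1 p.2
        rw [measure_compl ht (measure_ne_top _ _), measure_univ]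
      rw [this]
      exact measurable_const.sub hmt
    · -- disjoint union
      intro g hdisj hgm hm
      have : (fun p : X × A' => (P p.1 p.2) (⋃ i, g i))
          = fun p => ∑' i, (P p.1 p.2) (g i) := by
        funext p
        exact measure_iUnion hdisj hgm
      rw [this]
      exact Measurable.ennreal_tsum hm
  exact fun s hs => main hs

lemma measurable_integral_kern {ν : X → Measure X} (hν : Measurable ν)
    (hprob : ∀ x, IsProbabilityMeasure (ν x)) {f : X → ℝ} (hf : Measurable f) :
    Measurable fun x => ∫ y, f y ∂(ν x) := by
  let κ : ProbabilityTheory.Kernel X X := ⟨ν, hν⟩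
  haveI : ProbabilityTheory.IsMarkovKernel κ := ⟨hprob⟩
  have := MeasureTheory.StronglyMeasurable.integral_kernel_prod_right
    (κ := κ) (f := fun _ y => f y)
    ((hf.comp measurable_snd).stronglyMeasurable)
  exact this.measurable

end D

end AuxApprox



open MeasureTheory

/-- The Bellman operator of the time-bounded reachability MDP:
`(T V)(x) = max(1_G(x), sup_{a ∈ A} ∫ V(x') P(dx'|x,a))`. -/
noncomputable def bellmanOp {X A : Type*} [MeasurableSpace X]
    (G : Set X) (P : X → A → Measure X) (V : X → ℝ) : X → ℝ :=
  fun x => max (Set.indicator G (fun _ => (1 : ℝ)) x) (⨆ a : A, ∫ x', V x' ∂(P x a))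

/-- The optimal value functions: `V_0^* = 1_G`, `V_{b+1}^* = T V_b^*`. -/
noncomputable def Vstar {X A : Type*} [MeasurableSpace X]
    (G : Set X) (P : X → A → Measure X) : ℕ → X → ℝ
  | 0 => Set.indicator G fun _ => (1 : ℝ)
  | b + 1 => bellmanOp G P (Vstar G P b)

/-- The one-step optimal action value built from `V_b^*`:
`∫ V_b^*(x') P(dx'|x,a)` (so `Q_b^* = Qval G P (b-1)` for `b ≥ 1`). -/
noncomputable def Qval {X A : Type*} [MeasurableSpace X]
    (G : Set X) (P : X → A → Measure X) (b : ℕ) (x : X) (a : A) : ℝ :=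
  ∫ x', Vstar G P b x' ∂(P x a)

section E
variable {X A : Type*} [MetricSpace X] [Nonempty X] [MeasurableSpace X] [BorelSpace X]
  [MetricSpace A] [CompactSpace A] [Nonempty A]

lemma Vstar_usc (G : Set X) (hG : IsClosed G) (P : X → A → Measure X)
    (hP : ∀ x a, IsProbabilityMeasure (P x a))
    (hFeller : ∀ f : X → ℝ, Continuous f →
      Continuous fun p : X × A => ∫ x', f x' ∂(P p.1 p.2)) (b : ℕ) :
    UpperSemicontinuous (Vstar G P b) ∧ (∀ x, 0 ≤ Vstar G P b x) ∧ (∀ x, Vstar G P b x ≤ 1) := by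
  have hind0 : ∀ x, 0 ≤ Set.indicator G (fun _ => (1:ℝ)) x := fun x =>
    Set.indicator_nonneg (fun _ _ => zero_le_one) x
  have hind1 : ∀ x, Set.indicator G (fun _ => (1:ℝ)) x ≤ 1 := fun x => by
    by_cases hx : x ∈ G <;> simp [hx]
  induction b with
  | zero =>
    exact ⟨hG.upperSemicontinuous_indicator zero_le_one, hind0, hind1⟩
  | succ b ih =>
    obtain ⟨husc, h0, h1⟩ := ih
    have hint : ∀ x a, Integrable (Vstar G P b) (P x a) := fun x a => by
      haveI := hP x a
      exact integrable_of_bounded01 husc.measurable.aestronglyMeasurable h0 h1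
    have hQusc : UpperSemicontinuous fun p : X × A => ∫ x', Vstar G P b x' ∂(P p.1 p.2) :=
      usc_integral P hP hFeller husc h0 h1
    have hQ1 : ∀ p : X × A, (∫ x', Vstar G P b x' ∂(P p.1 p.2)) ≤ 1 := fun p => by
      haveI := hP p.1 p.2; exact integral_le_one (hint _ _) h1
    have hVs : Vstar G P (b+1) = fun y => max (Set.indicator G (fun _ => (1:ℝ)) y)
        (⨆ a : A, ∫ x', Vstar G P b x' ∂(P y a)) := rfl
    refine ⟨?_, ?_, ?_⟩
    · rw [hVs]
      exact usc_max (hG.upperSemicontinuous_indicator zero_le_one) (usc_sup hQusc hQ1)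
    · intro x
      rw [hVs]
      exact le_max_of_le_left (hind0 x)
    · intro x
      rw [hVs]
      exact max_le (hind1 x) (ciSup_le fun a => hQ1 (x, a))

end E

/-- Worst-case provability regret bound for greedy score-guided planning: if
`sup_{(x,a)} |h_b(x,a) − Q_b^*(x,a)| ≤ ε_b` for `b = 1,…,B`, `σ_b` are measurable greedy
selectors for `h_b`, and `W_b` are the induced greedy value functions
(`W_0 = 1_G`, `W_b(x) = max(1_G(x), ∫ W_{b−1}(x') P(dx'|x, σ_b(x)))`), then
`0 ≤ V_B^*(x) − W_B(x) ≤ 2 ∑_{b=1}^B ε_b` for every `x`. -/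

theorem greedy_regret_bound {X A : Type*}
    [MetricSpace X] [CompactSpace X] [MeasurableSpace X] [BorelSpace X]
    [MetricSpace A] [CompactSpace A] [Nonempty A] [MeasurableSpace A] [BorelSpace A]
    (G : Set X) (hG : IsClosed G)
    (P : X → A → Measure X) (hP : ∀ x a, IsProbabilityMeasure (P x a))
    (hFeller : ∀ f : X → ℝ, Continuous f →
      Continuous fun p : X × A => ∫ x', f x' ∂(P p.1 p.2))
    (B : ℕ) (hB : 1 ≤ B) (ε : ℕ → ℝ) (h : ℕ → X → A → ℝ)
    (hmeas : ∀ b, 1 ≤ b → b ≤ B → Measurable (fun p : X × A => h b p.1 p.2))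
    (hrange : ∀ b x a, h b x a ∈ Set.Icc (0 : ℝ) 1)
    (happrox : ∀ b, 1 ≤ b → b ≤ B → ∀ x a, |h b x a - Qval G P (b - 1) x a| ≤ ε b)
    (σ : ℕ → X → A) (hσmeas : ∀ b, 1 ≤ b → b ≤ B → Measurable (σ b))
    (hσgreedy : ∀ b, 1 ≤ b → b ≤ B → ∀ x, h b x (σ b x) = ⨆ a, h b x a)
    (Wv : ℕ → X → ℝ)
    (hW0 : ∀ x, Wv 0 x = Set.indicator G (fun _ => (1 : ℝ)) x)
    (hWstep : ∀ b, 1 ≤ b → b ≤ B → ∀ x,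
      Wv b x = max (Set.indicator G (fun _ => (1 : ℝ)) x)
        (∫ x', Wv (b - 1) x' ∂(P x (σ b x)))) :
    ∀ x, 0 ≤ Vstar G P B x - Wv B x ∧
      Vstar G P B x - Wv B x ≤ 2 * ∑ b ∈ Finset.Icc 1 B, ε b := by
  intro x0
  haveI : Nonempty X := ⟨x0⟩
  haveI : SecondCountableTopology X := inferInstance
  -- basic facts
  have hind0 : ∀ x : X, 0 ≤ Set.indicator G (fun _ => (1:ℝ)) x := fun x =>
    Set.indicator_nonneg (fun _ _ => zero_le_one) x
  have hind1 : ∀ x : X, Set.indicator G (fun _ => (1:ℝ)) x ≤ 1 := fun x => by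
    by_cases hx : x ∈ G <;> simp [hx]
  have hVfacts := fun b => Vstar_usc G hG P hP hFeller (b := b)
  have hVint : ∀ b x a, Integrable (Vstar G P b) (P x a) := fun b x a => by
    haveI := hP x a
    exact integrable_of_bounded01 (hVfacts b).1.measurable.aestronglyMeasurable
      (hVfacts b).2.1 (hVfacts b).2.2
  have hPm : Measurable fun p : X × A => P p.1 p.2 := measurable_P P hP hFeller
  have hεnn : ∀ b, 1 ≤ b → b ≤ B → 0 ≤ ε b := fun b h1b hbB =>
    le_trans (abs_nonneg _) (happrox b h1b hbB x0 (Classical.arbitrary A))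
  -- W facts by induction
  have hWfacts : ∀ b, b ≤ B → Measurable (Wv b) ∧ (∀ x, 0 ≤ Wv b x) ∧ (∀ x, Wv b x ≤ 1) := by
    intro b
    induction b with
    | zero =>
      intro _
      have hWe : Wv 0 = Set.indicator G (fun _ => (1:ℝ)) := funext hW0
      rw [hWe]
      exact ⟨measurable_const.indicator hG.measurableSet, hind0, hind1⟩
    | succ b ih =>
      intro hb1
      obtain ⟨hWm, hW0', hW1'⟩ := ih (Nat.le_of_succ_le hb1)
      have h1b : 1 ≤ b + 1 := Nat.succ_le_succ (Nat.zero_le _)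
      have hWint : ∀ x a, Integrable (Wv b) (P x a) := fun x a => by
        haveI := hP x a
        exact integrable_of_bounded01 hWm.aestronglyMeasurable hW0' hW1'
      have hν : Measurable fun x : X => P x (σ (b+1) x) :=
        hPm.comp (measurable_id.prodMk (hσmeas (b+1) h1b hb1))
      have hIm : Measurable fun x : X => ∫ x', Wv b x' ∂(P x (σ (b+1) x)) :=
        measurable_integral_kern hν (fun x => hP x _) hWm
      have hWe : Wv (b+1) = fun x => max (Set.indicator G (fun _ => (1:ℝ)) x)
          (∫ x', Wv b x' ∂(P x (σ (b+1) x))) := funext fun x => hWstep (b+1) h1b hb1 x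
      refine ⟨?_, ?_, ?_⟩
      · rw [hWe]
        exact (measurable_const.indicator hG.measurableSet).max hIm
      · intro x; rw [hWe]; exact le_max_of_le_left (hind0 x)
      · intro x; rw [hWe]
        refine max_le (hind1 x) ?_
        haveI := hP x (σ (b+1) x)
        exact integral_le_one (hWint _ _) hW1'
  -- main induction
  have main : ∀ b, b ≤ B → ∀ x, Wv b x ≤ Vstar G P b x ∧
      Vstar G P b x ≤ Wv b x + 2 * ∑ j ∈ Finset.Icc 1 b, ε j := by
    intro b
    induction b with
    | zero =>
      intro _ x
      have : Wv 0 x = Vstar G P 0 x := hW0 x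
      simp [this]
    | succ b ih =>
      intro hb1 x
      have hbB : b ≤ B := Nat.le_of_succ_le hb1
      have h1b : 1 ≤ b + 1 := Nat.succ_le_succ (Nat.zero_le _)
      obtain ⟨hWm, hW0', hW1'⟩ := hWfacts b hbB
      have hWint : ∀ a, Integrable (Wv b) (P x a) := fun a => by
        haveI := hP x a
        exact integrable_of_bounded01 hWm.aestronglyMeasurable hW0' hW1'
      set s := σ (b+1) x with hs
      set Q : A → ℝ := fun a => ∫ x', Vstar G P b x' ∂(P x a) with hQ
      set I : ℝ := ∫ x', Wv b x' ∂(P x s) with hI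
      have hQ1 : ∀ a, Q a ≤ 1 := fun a => by
        haveI := hP x a
        exact integral_le_one (hVint b x a) (hVfacts b).2.2
      have hQbdd : BddAbove (Set.range Q) := ⟨1, by rintro _ ⟨a, rfl⟩; exact hQ1 a⟩
      have hVs : Vstar G P (b+1) x = max (Set.indicator G (fun _ => (1:ℝ)) x) (⨆ a, Q a) := rfl
      have hWs : Wv (b+1) x = max (Set.indicator G (fun _ => (1:ℝ)) x) I :=
        hWstep (b+1) h1b hb1 x
      have hSnn : 0 ≤ ∑ j ∈ Finset.Icc 1 b, ε j :=
        Finset.sum_nonneg fun j hj => by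
          rw [Finset.mem_Icc] at hj
          exact hεnn j hj.1 (hj.2.trans hbB)
      have hSsucc : ∑ j ∈ Finset.Icc 1 (b+1), ε j
          = (∑ j ∈ Finset.Icc 1 b, ε j) + ε (b+1) :=
        Finset.sum_Icc_succ_top h1b ε
      -- lower bound : W ≤ V
      have hlow : Wv (b+1) x ≤ Vstar G P (b+1) x := by
        rw [hVs, hWs]
        refine max_le_max le_rfl ?_
        have h1 : I ≤ Q s := integral_mono (hWint s) (hVint b x s) fun y => (ih hbB y).1
        exact h1.trans (le_ciSup hQbdd s)
      -- upper bound
      have hhbdd : BddAbove (Set.range fun a => h (b+1) x a) :=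
        ⟨1, by rintro _ ⟨a, rfl⟩; exact (hrange (b+1) x a).2⟩
      have habs : ∀ a, |h (b+1) x a - Q a| ≤ ε (b+1) := fun a => happrox (b+1) h1b hb1 x a
      have hsup : (⨆ a, Q a) ≤ I + 2 * ∑ j ∈ Finset.Icc 1 b, ε j + 2 * ε (b+1) := by
        have step1 : (⨆ a, Q a) ≤ (⨆ a, h (b+1) x a) + ε (b+1) := by
          refine ciSup_le fun a => ?_
          have h1 := (abs_le.1 (habs a)).1
          have h2 : h (b+1) x a ≤ ⨆ a, h (b+1) x a := le_ciSup hhbdd a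
          linarith
        have step3 : (⨆ a, h (b+1) x a) = h (b+1) x s := (hσgreedy (b+1) h1b hb1 x).symm
        have step4 : h (b+1) x s ≤ Q s + ε (b+1) := by
          have := (abs_le.1 (habs s)).2
          linarith
        have step5 : Q s ≤ I + 2 * ∑ j ∈ Finset.Icc 1 b, ε j := by
          have hmono : Q s ≤ ∫ x', (Wv b x' + 2 * ∑ j ∈ Finset.Icc 1 b, ε j) ∂(P x s) :=
            integral_mono (hVint b x s) ((hWint s).add (integrable_const _))
              fun y => (ih hbB y).2
          rwa [integral_add (hWint s) (integrable_const _), integral_const,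
            (by haveI := hP x s; simp : (P x s).real Set.univ • (2 * ∑ j ∈ Finset.Icc 1 b, ε j) = 2 * ∑ j ∈ Finset.Icc 1 b, ε j)] at hmono
        linarith [step1, step3 ▸ step1]
      have hup : Vstar G P (b+1) x ≤ Wv (b+1) x + 2 * ∑ j ∈ Finset.Icc 1 (b+1), ε j := by
        rw [hVs, hWs, hSsucc]
        have hnn : 0 ≤ 2 * ((∑ j ∈ Finset.Icc 1 b, ε j) + ε (b+1)) := by
          have := hεnn (b+1) h1b hb1
          linarith
        refine max_le ?_ ?_
        · calc Set.indicator G (fun _ => (1:ℝ)) x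
              ≤ max (Set.indicator G (fun _ => (1:ℝ)) x) I := le_max_left _ _
            _ ≤ _ := by linarith [hnn]
        · calc (⨆ a, Q a) ≤ I + 2 * ∑ j ∈ Finset.Icc 1 b, ε j + 2 * ε (b+1) := hsup
            _ ≤ max (Set.indicator G (fun _ => (1:ℝ)) x) I
                + 2 * ((∑ j ∈ Finset.Icc 1 b, ε j) + ε (b+1)) := by
              have := le_max_right (Set.indicator G (fun _ => (1:ℝ)) x) I
              linarith
      exact ⟨hlow, hup⟩
  obtain ⟨hl, hu⟩ := main B le_rfl x0
  constructor
  · linarith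
  · linarith
end

section
/- Fast-rate expected regret under a margin condition: suppose in addition that the margin condition ν({x : Δ(x) ≤ 2ε}) ≤ C_Δ (2ε)^β holds for some constants C_Δ > 0 and β > 0, and that Δ and r are ν-measurable. Then the expected one-step regret satisfies ∫ r dν ≤ 2ε · C_Δ (2ε)^β = 2^{β+1} C_Δ ε^{β+1}. -/
open MeasureTheory

/-- Fast-rate expected regret under a margin condition: if moreover
`ν({x : Δ(x) ≤ 2ε}) ≤ C_Δ (2ε)^β` with `C_Δ > 0`, `β > 0`, and the gap `Δ` and regret `r`
are measurable, then `∫ r dν ≤ 2ε · C_Δ (2ε)^β = 2^{β+1} C_Δ ε^{β+1}`. -/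
theorem fast_rate_expected_regret {X A : Type*}
    [MeasurableSpace X] [Fintype A] [MeasurableSpace A]
    (hA : 2 ≤ Fintype.card A)
    (ν : Measure X) [IsProbabilityMeasure ν]
    (ε : ℝ) (hε : 0 ≤ ε) (Qs h : X → A → ℝ)
    (hQ01 : ∀ x a, Qs x a ∈ Set.Icc (0 : ℝ) 1) (hh01 : ∀ x a, h x a ∈ Set.Icc (0 : ℝ) 1)
    (happrox : ∀ x a, |h x a - Qs x a| ≤ ε)
    (astar ahat : X → A)
    (hastar_meas : Measurable astar) (hahat_meas : Measurable ahat)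
    (hastar : ∀ x a, Qs x a ≤ Qs x (astar x))
    (hahat : ∀ x a, h x a ≤ h x (ahat x))
    (CΔ β : ℝ) (hCΔ : 0 < CΔ) (hβ : 0 < β)
    (hΔmeas : Measurable fun x =>
      Qs x (astar x) - (⨆ a : {a : A // a ≠ astar x}, Qs x a))
    (hrmeas : Measurable fun x => (⨆ a : A, Qs x a) - Qs x (ahat x))
    (hmargin : ν {x : X | Qs x (astar x) - (⨆ a : {a : A // a ≠ astar x}, Qs x a) ≤ 2 * ε}
      ≤ ENNReal.ofReal (CΔ * (2 * ε) ^ β)) :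
    (∫ x, ((⨆ a : A, Qs x a) - Qs x (ahat x)) ∂ν) ≤ 2 * ε * (CΔ * (2 * ε) ^ β) ∧
      2 * ε * (CΔ * (2 * ε) ^ β) = 2 ^ (β + 1) * CΔ * ε ^ (β + 1) := by
  classical
  have hsup : ∀ x, (⨆ a : A, Qs x a) = Qs x (astar x) := by
    intro x
    have hne : Nonempty A := ⟨astar x⟩
    exact le_antisymm (ciSup_le (hastar x))
      (le_ciSup (Set.Finite.bddAbove (Set.finite_range _)) _)
  set Δ : X → ℝ := fun x => Qs x (astar x) - (⨆ a : {a : A // a ≠ astar x}, Qs x a) with hΔ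
  set r : X → ℝ := fun x => (⨆ a : A, Qs x a) - Qs x (ahat x) with hr
  set S : Set X := {x : X | Δ x ≤ 2 * ε} with hS
  have hSmeas : MeasurableSet S := measurableSet_le hΔmeas measurable_const
  have hr_le : ∀ x, r x ≤ 2 * ε := by
    intro x
    have h1 : Qs x (astar x) ≤ h x (astar x) + ε := by
      have := abs_le.1 (happrox x (astar x)); linarith [this.1]
    have h2 : h x (ahat x) ≤ Qs x (ahat x) + ε := by
      have := abs_le.1 (happrox x (ahat x)); linarith [this.2]
    have h3 := hahat x (astar x)
    simp only [hr, hsup x]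
    linarith
  have hr_nonneg : ∀ x, 0 ≤ r x := by
    intro x
    simp only [hr, hsup x]
    linarith [hastar x (ahat x)]
  have key : ∀ x, r x ≤ S.indicator (fun _ => 2 * ε) x := by
    intro x
    by_cases hx : x ∈ S
    · rw [Set.indicator_of_mem hx]; exact hr_le x
    · rw [Set.indicator_of_notMem hx]
      have hΔx : 2 * ε < Δ x := lt_of_not_ge hx
      by_cases heq : ahat x = astar x
      · simp only [hr, hsup x, heq]; simp
      · exfalso
        have hnsub : Nonempty {a : A // a ≠ astar x} := ⟨⟨ahat x, heq⟩⟩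
        have hle : Qs x (ahat x) ≤ ⨆ a : {a : A // a ≠ astar x}, Qs x a :=
          le_ciSup (f := fun a : {a : A // a ≠ astar x} => Qs x a.1)
            (Set.Finite.bddAbove (Set.finite_range _)) ⟨ahat x, heq⟩
        have : Δ x ≤ r x := by
          simp only [hr, hsup x, hΔ]; linarith
        linarith [hr_le x]
  have hr_int : Integrable r ν := by
    refine ⟨hrmeas.aestronglyMeasurable, ?_⟩
    apply MeasureTheory.HasFiniteIntegral.of_bounded (C := 2 * ε)
    filter_upwards with x
    rw [Real.norm_eq_abs, abs_of_nonneg (hr_nonneg x)]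
    exact hr_le x
  have hind_int : Integrable (S.indicator fun _ => 2 * ε) ν :=
    (integrable_indicator_iff hSmeas).2 (integrableOn_const (measure_lt_top ν S).ne)
  have hintegral : (∫ x, r x ∂ν) ≤ 2 * ε * (ν S).toReal := by
    calc (∫ x, r x ∂ν) ≤ ∫ x, S.indicator (fun _ => 2 * ε) x ∂ν :=
          integral_mono hr_int hind_int key
      _ = (ν S).toReal • (2 * ε) := integral_indicator_const _ hSmeas
      _ = 2 * ε * (ν S).toReal := by rw [smul_eq_mul]; ring
  have hpow_nonneg : 0 ≤ CΔ * (2 * ε) ^ β :=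
    mul_nonneg hCΔ.le (Real.rpow_nonneg (by linarith) _)
  have hνS : (ν S).toReal ≤ CΔ * (2 * ε) ^ β :=
    ENNReal.toReal_le_of_le_ofReal hpow_nonneg hmargin
  constructor
  · calc (∫ x, r x ∂ν) ≤ 2 * ε * (ν S).toReal := hintegral
      _ ≤ 2 * ε * (CΔ * (2 * ε) ^ β) :=
          mul_le_mul_of_nonneg_left hνS (by linarith)
  · rcases eq_or_lt_of_le hε with hε0 | hε0
    · rw [← hε0]
      simp [Real.zero_rpow hβ.ne', Real.zero_rpow (by linarith : β + 1 ≠ 0)]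
    · rw [Real.mul_rpow (by norm_num) hε, Real.rpow_add_one (by positivity) β,
        Real.rpow_add_one hε0.ne' β]
      ring
end

section
/- Top-k stability under margin: let A be a finite set with |A| ≥ k+1, let ε ≥ 0, and let Q*, h : A → [0,1] satisfy |h(a) − Q*(a)| ≤ ε for all a ∈ A. Order the actions a^{(1)}, a^{(2)}, …, a^{(|A|)} so that Q*(a^{(1)}) ≥ Q*(a^{(2)}) ≥ … ≥ Q*(a^{(|A|)}), and define the (k+1)-gap Δ^{(k)} := Q*(a^{(1)}) − Q*(a^{(k+1)}). If Δ^{(k)} > 2ε, then every subset S ⊆ A of size k consisting of actions with the k largest values of h (i.e., h(a) ≥ h(a') for all a ∈ S and a' ∉ S) contains an action a with Q*(a) = max_{a'∈A} Q*(a'). -/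
/-- Top-k stability under margin: let `|A| ≥ k+1`, `|h − Q*| ≤ ε` pointwise, and order
the actions by decreasing `Q*` via `e : Fin |A| ≃ A`. If the `(k+1)`-gap
`Δ^{(k)} = Q*(a^{(1)}) − Q*(a^{(k+1)})` exceeds `2ε`, then every size-`k` set of actions
with the `k` largest `h`-values contains an action maximizing `Q*`. -/
theorem topk_stability_under_margin {A : Type*} [Fintype A]
    (k : ℕ) (hk : 1 ≤ k) (hcard : k + 1 ≤ Fintype.card A)
    (ε : ℝ) (hε : 0 ≤ ε) (Qs h : A → ℝ)
    (hQ01 : ∀ a, Qs a ∈ Set.Icc (0 : ℝ) 1) (hh01 : ∀ a, h a ∈ Set.Icc (0 : ℝ) 1)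
    (happrox : ∀ a, |h a - Qs a| ≤ ε)
    (e : Fin (Fintype.card A) ≃ A)
    (hsorted : ∀ i j : Fin (Fintype.card A), i ≤ j → Qs (e j) ≤ Qs (e i))
    (hgap : 2 * ε < Qs (e ⟨0, by omega⟩) - Qs (e ⟨k, by omega⟩)) :
    ∀ S : Finset A, S.card = k → (∀ a ∈ S, ∀ a' ∉ S, h a' ≤ h a) →
      ∃ a ∈ S, ∀ a', Qs a' ≤ Qs a := by
  intro S hcardS hS
  set i0 : Fin (Fintype.card A) := ⟨0, by omega⟩ with hi0
  set ik : Fin (Fintype.card A) := ⟨k, by omega⟩ with hik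
  have hmax : ∀ a', Qs a' ≤ Qs (e i0) := by
    intro a'
    have := hsorted i0 (e.symm a') (by simp [hi0, Fin.le_def])
    simpa using this
  by_cases h0 : e i0 ∈ S
  · exact ⟨e i0, h0, hmax⟩
  · exfalso
    -- every a ∈ S has Qs a > Qs (e ik)
    have hbig : ∀ a ∈ S, Qs (e ik) < Qs a := by
      intro a ha
      have h1 : h (e i0) ≤ h a := hS a ha (e i0) h0
      have h2 : |h a - Qs a| ≤ ε := happrox a
      have h3 : |h (e i0) - Qs (e i0)| ≤ ε := happrox (e i0)
      have h2' : -ε ≤ h a - Qs a ∧ h a - Qs a ≤ ε := abs_le.mp h2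
      have h3' : -ε ≤ h (e i0) - Qs (e i0) ∧ h (e i0) - Qs (e i0) ≤ ε := abs_le.mp h3
      linarith
    -- hence every a ∈ S has index < k
    have hidx : ∀ a ∈ S, (e.symm a : ℕ) < k := by
      intro a ha
      by_contra hge
      push_neg at hge
      have : Qs (e (e.symm a)) ≤ Qs (e ik) := hsorted ik (e.symm a) (by simpa [hik, Fin.le_def])
      simp only [Equiv.apply_symm_apply] at this
      exact absurd this (not_le.mpr (hbig a ha))
    -- image of indices
    have hinj : Set.InjOn (fun a => ((e.symm a : Fin (Fintype.card A)) : ℕ)) S := by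
      intro a _ b _ hab
      have : e.symm a = e.symm b := Fin.ext hab
      exact e.symm.injective this
    have hsub : S.image (fun a => ((e.symm a : Fin (Fintype.card A)) : ℕ)) ⊆ Finset.range k := by
      intro n hn
      simp only [Finset.mem_image] at hn
      obtain ⟨a, ha, rfl⟩ := hn
      exact Finset.mem_range.mpr (hidx a ha)
    have hcardIm : (S.image (fun a => ((e.symm a : Fin (Fintype.card A)) : ℕ))).card = k := by
      rw [Finset.card_image_of_injOn hinj, hcardS]
    have heq : S.image (fun a => ((e.symm a : Fin (Fintype.card A)) : ℕ)) = Finset.range k :=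
      Finset.eq_of_subset_of_card_le hsub (by simp [hcardIm])
    have h0mem : (0 : ℕ) ∈ S.image (fun a => ((e.symm a : Fin (Fintype.card A)) : ℕ)) := by
      rw [heq]; exact Finset.mem_range.mpr hk
    simp only [Finset.mem_image] at h0mem
    obtain ⟨a, ha, ha0⟩ := h0mem
    have : e.symm a = i0 := Fin.ext (by simpa [hi0] using ha0)
    have : a = e i0 := by rw [← this, Equiv.apply_symm_apply]
    exact h0 (this ▸ ha)
end
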